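/- arXiv:math/0203193 — 2 statements merged into one kernel-verified Lean document; each statement's English description precedes it below -/
import Mathlib

section
/- Let M be a von Neumann algebra acting on a complex Hilbert space H, let P : M → M be a normal, unital, completely positive linear map, and let (π, K, W) be a minimal Stinespring triple for P. Then for each S ∈ M' there is a unique operator φ(S) ∈ B(K) commuting with π(M) such that φ(S)W = WS; moreover ‖φ(S)‖ ≤ ‖S‖, and the map S ↦ φ(S) is a unital *-homomorphism of M' into the commutant of π(M) that is normal (weak-operator continuous on bounded sets). -/
open scoped ComplexOrder
open ContinuousLinearMap

noncomputable section

/-- Positivity of an `n × n` operator matrix `(a i j)`, regarded as an operator on the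
`n`-fold direct sum `Hⁿ`: `∑ᵢⱼ ⟨kᵢ, a i j kⱼ⟩ ≥ 0` for all `k₁, …, kₙ ∈ H`. -/
def PosOpMatrix {H : Type*} [NormedAddCommGroup H] [InnerProductSpace ℂ H] {n : ℕ}
    (a : Fin n → Fin n → (H →L[ℂ] H)) : Prop :=
  ∀ k : Fin n → H, 0 ≤ ∑ i, ∑ j, (inner ℂ (k i) (a i j (k j)) : ℂ)

/-- Complete positivity of a map relative to a von Neumann algebra `M`: positive operator
matrices with entries in `M` are sent to positive operator matrices. -/
def IsCPOn {H : Type*} [NormedAddCommGroup H] [InnerProductSpace ℂ H] [CompleteSpace H]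
    (M : VonNeumannAlgebra H) (P : (H →L[ℂ] H) → (H →L[ℂ] H)) : Prop :=
  ∀ (n : ℕ) (a : Fin n → Fin n → (H →L[ℂ] H)),
    (∀ i j, a i j ∈ M) → PosOpMatrix a → PosOpMatrix fun i j => P (a i j)

/-- Weak-operator continuity of a map on bounded subsets of `s`; for bounded linear maps on
von Neumann algebras this captures normality (σ-weak continuity). -/
def WOTContinuousOnBalls {H K : Type*} [NormedAddCommGroup H] [InnerProductSpace ℂ H]
    [NormedAddCommGroup K] [InnerProductSpace ℂ K]
    (s : Set (H →L[ℂ] H)) (f : (H →L[ℂ] H) → (K →L[ℂ] K)) : Prop :=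
  ∀ r : ℝ, ContinuousOn
    (fun T : H →WOT[ℂ] H =>
      (ContinuousLinearMapWOT.linearEquiv (σ := RingHom.id ℂ) (E := K) (F := K) ℂ).symm (f (((ContinuousLinearMapWOT.linearEquiv (σ := RingHom.id ℂ) (E := H) (F := H) ℂ).symm).symm T)))
    ((ContinuousLinearMapWOT.linearEquiv (σ := RingHom.id ℂ) (E := H) (F := H) ℂ).symm '' (s ∩ Metric.closedBall 0 r))

/-- The closure of a set of operators in the weak operator topology. -/
def WOTClosure {H K : Type*} [NormedAddCommGroup H] [InnerProductSpace ℂ H]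
    [NormedAddCommGroup K] [InnerProductSpace ℂ K] (s : Set (H →L[ℂ] K)) : Set (H →L[ℂ] K) :=
  (ContinuousLinearMapWOT.linearEquiv (σ := RingHom.id ℂ) (E := H) (F := K) ℂ).symm ⁻¹' closure ((ContinuousLinearMapWOT.linearEquiv (σ := RingHom.id ℂ) (E := H) (F := K) ℂ).symm '' s)

/-- A unital normal `*`-representation of (the elements of) a von Neumann algebra `M` on a
Hilbert space `K`, encoded as a function on all of `B(H)` whose properties are imposed only on
members of `M`. -/
structure IsNormalRepOn {H K : Type*} [NormedAddCommGroup H] [InnerProductSpace ℂ H]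
    [CompleteSpace H] [NormedAddCommGroup K] [InnerProductSpace ℂ K] [CompleteSpace K]
    (M : VonNeumannAlgebra H) (π : (H →L[ℂ] H) → (K →L[ℂ] K)) : Prop where
  map_add : ∀ S ∈ M, ∀ T ∈ M, π (S + T) = π S + π T
  map_smul : ∀ (c : ℂ), ∀ T ∈ M, π (c • T) = c • π T
  map_mul : ∀ S ∈ M, ∀ T ∈ M, π (S * T) = π S * π T
  map_star : ∀ T ∈ M, π (star T) = star (π T)
  map_one : π 1 = 1
  normal : WOTContinuousOnBalls (M : Set (H →L[ℂ] H)) π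

/-- A completely positive linear map of a von Neumann algebra `M` into itself. -/
structure IsCPMapOn {H : Type*} [NormedAddCommGroup H] [InnerProductSpace ℂ H] [CompleteSpace H]
    (M : VonNeumannAlgebra H) (P : (H →L[ℂ] H) → (H →L[ℂ] H)) : Prop where
  map_mem : ∀ T ∈ M, P T ∈ M
  map_add : ∀ S ∈ M, ∀ T ∈ M, P (S + T) = P S + P T
  map_smul : ∀ (c : ℂ), ∀ T ∈ M, P (c • T) = c • P T
  cp : IsCPOn M P

/-- A normal, unital, completely positive map on a von Neumann algebra `M`. -/
structure IsUNCPMapOn {H : Type*} [NormedAddCommGroup H] [InnerProductSpace ℂ H] [CompleteSpace H]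
    (M : VonNeumannAlgebra H) (P : (H →L[ℂ] H) → (H →L[ℂ] H))
    extends IsCPMapOn M P : Prop where
  map_one : P 1 = 1
  normal : WOTContinuousOnBalls (M : Set (H →L[ℂ] H)) P

/-- A Stinespring triple `(π, K, W)` for `P`: `π` is a unital normal `*`-representation of `M`
on `K`, `W : H → K` is an isometry, and `P T = W* (π T) W` for `T ∈ M`. -/
structure IsStinespring {H K : Type*} [NormedAddCommGroup H] [InnerProductSpace ℂ H]
    [CompleteSpace H] [NormedAddCommGroup K] [InnerProductSpace ℂ K] [CompleteSpace K]
    (M : VonNeumannAlgebra H) (P : (H →L[ℂ] H) → (H →L[ℂ] H))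
    (π : (H →L[ℂ] H) → (K →L[ℂ] K)) (W : H →L[ℂ] K) : Prop where
  rep : IsNormalRepOn M π
  isometry : ∀ h : H, ‖W h‖ = ‖h‖
  dilation : ∀ T ∈ M, P T = ContinuousLinearMap.adjoint W ∘L (π T ∘L W)

/-- A minimal Stinespring triple: additionally `{π(T) W h}` has dense span in `K`. -/
structure IsMinimalStinespring {H K : Type*} [NormedAddCommGroup H] [InnerProductSpace ℂ H]
    [CompleteSpace H] [NormedAddCommGroup K] [InnerProductSpace ℂ K] [CompleteSpace K]
    (M : VonNeumannAlgebra H) (P : (H →L[ℂ] H) → (H →L[ℂ] H))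
    (π : (H →L[ℂ] H) → (K →L[ℂ] K)) (W : H →L[ℂ] K)
    extends IsStinespring M P π W : Prop where
  minimal :
    (Submodule.span ℂ {k : K | ∃ T ∈ M, ∃ h : H, k = π T (W h)}).topologicalClosure = ⊤

/-- The `P`-boundedness condition with constant `C` for an operator `Y ∈ B(H)`:
`‖∑ᵢ Sᵢ Y* hᵢ‖² ≤ C ∑ᵢⱼ ⟨hᵢ, P(Sᵢ* Sⱼ) hⱼ⟩` for all `Sᵢ ∈ M` and `hᵢ ∈ H`. -/
def PBound {H : Type*} [NormedAddCommGroup H] [InnerProductSpace ℂ H] [CompleteSpace H]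
    (M : VonNeumannAlgebra H) (P : (H →L[ℂ] H) → (H →L[ℂ] H))
    (Y : H →L[ℂ] H) (C : ℝ) : Prop :=
  ∀ (n : ℕ) (S : Fin n → (H →L[ℂ] H)), (∀ i, S i ∈ M) → ∀ h : Fin n → H,
    ((‖∑ i, S i (ContinuousLinearMap.adjoint Y (h i))‖ ^ 2 : ℝ) : ℂ) ≤
      (C : ℂ) * ∑ i, ∑ j, (inner ℂ (h i) (P (star (S i) * S j) (h j)) : ℂ)

/-- The Arveson correspondence of `P`: all `Y ∈ B(H)` satisfying the `P`-boundedness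
condition with some nonnegative constant. -/
def ArvesonCorrespondence {H : Type*} [NormedAddCommGroup H] [InnerProductSpace ℂ H]
    [CompleteSpace H] (M : VonNeumannAlgebra H) (P : (H →L[ℂ] H) → (H →L[ℂ] H)) :
    Set (H →L[ℂ] H) :=
  {Y | ∃ C : ℝ, 0 ≤ C ∧ PBound M P Y C}

/-- A cp-semigroup on `M`: a semigroup `{P_t}_{t ≥ 0}` of unital, normal, completely positive
maps on `M` with `P_0 = id`. -/
structure IsCpSemigroup {H : Type*} [NormedAddCommGroup H] [InnerProductSpace ℂ H]
    [CompleteSpace H] (M : VonNeumannAlgebra H)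
    (P : ℝ → (H →L[ℂ] H) → (H →L[ℂ] H)) : Prop where
  uncp : ∀ t : ℝ, 0 ≤ t → IsUNCPMapOn M (P t)
  id_zero : ∀ T ∈ M, P 0 T = T
  comp : ∀ s t : ℝ, 0 ≤ s → 0 ≤ t → ∀ T ∈ M, P (t + s) T = P t (P s T)

/-- Weak continuity of a cp-semigroup: `t ↦ ⟨P_t(a) h, k⟩` is continuous on `[0, ∞)`. -/
def IsWeaklyContinuousSemigroup {H : Type*} [NormedAddCommGroup H] [InnerProductSpace ℂ H]
    [CompleteSpace H] (M : VonNeumannAlgebra H)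
    (P : ℝ → (H →L[ℂ] H) → (H →L[ℂ] H)) : Prop :=
  ∀ T ∈ M, ∀ h k : H,
    ContinuousOn (fun t : ℝ => (inner ℂ ((P t T) h) k : ℂ)) (Set.Ici (0 : ℝ))

/-- A semigroup `{α_t}_{t ≥ 0}` of unital, normal `*`-endomorphisms of a von Neumann
algebra `R`, with `α_0 = id`. -/
structure IsEndoSemigroup {K : Type*} [NormedAddCommGroup K] [InnerProductSpace ℂ K]
    [CompleteSpace K] (R : VonNeumannAlgebra K)
    (α : ℝ → (K →L[ℂ] K) → (K →L[ℂ] K)) : Prop where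
  rep : ∀ t : ℝ, 0 ≤ t → IsNormalRepOn R (α t)
  map_mem : ∀ t : ℝ, 0 ≤ t → ∀ S ∈ R, α t S ∈ R
  id_zero : ∀ S ∈ R, α 0 S = S
  comp : ∀ s t : ℝ, 0 ≤ s → 0 ≤ t → ∀ S ∈ R, α (t + s) S = α t (α s S)


/-!
For `S ∈ M'` the lift must send `∑ π(Tᵢ) W hᵢ` to `∑ π(Tᵢ) W S hᵢ`; such sums are dense in `K`
by minimality, so everything rests on the bound
`‖∑ π(Tᵢ) W S hᵢ‖ ≤ ‖S‖ ‖∑ π(Tᵢ) W hᵢ‖`. Since `⟪π(Tᵢ) W a, π(Tⱼ) W b⟫ = ⟪a, P(Tᵢ* Tⱼ) b⟫` and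
`M'` commutes with `P(M) ⊆ M`, every element of `M'` acts symmetrically for the semi-inner
product that `K` induces on `M ⊗ H`; for the self-adjoint element `S* S` the power trick then
bounds its action by `‖S* S‖ = ‖S‖²`. The algebraic identities for the lift are checked on the
total set `{π(T) W h}`, and normality holds because `S ↦ π(T) W S h` is weakly continuous and
the lift is uniformly bounded on balls.
-/

open Filter Topology

theorem le_of_forall_mul_pow_two_pow_le {a x y B : ℝ} (ha : 0 < a) (hy : 0 ≤ y)
    (h : ∀ k : ℕ, a * x ^ 2 ^ k ≤ B * y ^ 2 ^ k) : x ≤ y := by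
  by_contra! hxy
  have hx : 0 < x := hy.trans_lt hxy
  have hlim : Tendsto (fun k : ℕ => B * (y / x) ^ 2 ^ k) atTop (𝓝 0) := by
    simpa using ((tendsto_pow_atTop_nhds_zero_of_lt_one (div_nonneg hy hx.le)
      ((div_lt_one hx).2 hxy)).comp (tendsto_pow_atTop_atTop_of_one_lt one_lt_two)).const_mul B
  have hle : ∀ k : ℕ, a ≤ B * (y / x) ^ 2 ^ k := fun k => by
    rw [div_pow, mul_div_assoc', le_div_iff₀ (by positivity)]
    exact h k
  exact ha.not_ge (ge_of_tendsto' hlim hle)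

section InnerShift

variable {𝕜 E : Type*} [RCLike 𝕜] [NormedAddCommGroup E] [InnerProductSpace 𝕜 E]

local notation "⟪" x ", " y "⟫" => inner 𝕜 x y

/-- The power trick for a symmetric operator `C`, applied to `g m = C ^ m x`: iterating
`‖g m‖ ^ 2 = ⟪g 0, g (2 * m)⟫` gives `‖g 1‖ ^ 2 ^ k ≤ ‖g 0‖ ^ (2 ^ k - 1) * ‖g (2 ^ k)‖`. -/
theorem norm_one_le_of_inner_succ_symm {g : ℕ → E}
    (hg : ∀ a b, ⟪g (a + 1), g b⟫ = ⟪g a, g (b + 1)⟫) {B c : ℝ} (hc : 0 ≤ c)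
    (hgrowth : ∀ m, ‖g m‖ ≤ B * c ^ m) : ‖g 1‖ ≤ c * ‖g 0‖ := by
  have hankel : ∀ a b, ⟪g a, g b⟫ = ⟪g 0, g (a + b)⟫ := by
    intro a
    induction a with
    | zero => simp
    | succ a ih => intro b; rw [hg, ih, Nat.add_right_comm, Nat.add_assoc]
  have hsq : ∀ m, ‖g m‖ ^ 2 ≤ ‖g 0‖ * ‖g (2 * m)‖ := fun m => by
    rw [@norm_sq_eq_re_inner 𝕜, hankel, ← two_mul]
    exact (RCLike.re_le_norm _).trans (norm_inner_le_norm _ _)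
  have hpow : ∀ k, ‖g 1‖ ^ 2 ^ k ≤ ‖g 0‖ ^ (2 ^ k - 1) * ‖g (2 ^ k)‖ := by
    intro k
    induction k with
    | zero => simp
    | succ k ih =>
      calc ‖g 1‖ ^ 2 ^ (k + 1) = (‖g 1‖ ^ 2 ^ k) ^ 2 := by rw [pow_succ, pow_mul]
        _ ≤ (‖g 0‖ ^ (2 ^ k - 1) * ‖g (2 ^ k)‖) ^ 2 := by gcongr
        _ = ‖g 0‖ ^ (2 * (2 ^ k - 1)) * ‖g (2 ^ k)‖ ^ 2 := by ring
        _ ≤ ‖g 0‖ ^ (2 * (2 ^ k - 1)) * (‖g 0‖ * ‖g (2 ^ (k + 1))‖) := by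
          rw [pow_succ' 2 k]
          gcongr
          exact hsq _
        _ = ‖g 0‖ ^ (2 ^ (k + 1) - 1) * ‖g (2 ^ (k + 1))‖ := by
          have hexp : 2 * (2 ^ k - 1) + 1 = 2 ^ (k + 1) - 1 := by
            have : 1 ≤ 2 ^ k := Nat.one_le_two_pow
            rw [pow_succ]
            omega
          rw [← mul_assoc, ← pow_succ, hexp]
  rcases (norm_nonneg (g 0)).eq_or_lt with h0 | h0
  · have := hsq 1
    rw [← h0, zero_mul] at this
    rw [← h0, mul_zero]
    nlinarith [norm_nonneg (g 1)]
  refine le_of_forall_mul_pow_two_pow_le h0 (by positivity) (B := B) fun k => ?_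
  calc ‖g 0‖ * ‖g 1‖ ^ 2 ^ k ≤ ‖g 0‖ * (‖g 0‖ ^ (2 ^ k - 1) * (B * c ^ 2 ^ k)) := by
        gcongr
        exact (hpow k).trans (by gcongr; exact hgrowth _)
    _ = B * (c * ‖g 0‖) ^ 2 ^ k := by
        rw [← mul_assoc, ← pow_succ', Nat.sub_add_cancel Nat.one_le_two_pow]
        ring

end InnerShift

theorem Finsupp.mapRange_linearMap_mul {ι R V : Type*} [Semiring R] [TopologicalSpace V]
    [AddCommMonoid V] [Module R V] (A B : V →L[R] V) (f : ι →₀ V) :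
    Finsupp.mapRange.linearMap ((A * B : V →L[R] V) : V →ₗ[R] V) f =
      Finsupp.mapRange.linearMap (A : V →ₗ[R] V) (Finsupp.mapRange.linearMap (B : V →ₗ[R] V) f) :=
  Finsupp.ext fun _ => rfl

section Dense

variable {𝕜 E F : Type*} [RCLike 𝕜]
  [NormedAddCommGroup E] [InnerProductSpace 𝕜 E] [CompleteSpace E]
  [NormedAddCommGroup F] [InnerProductSpace 𝕜 F] [CompleteSpace F]

theorem ContinuousLinearMap.eq_adjoint_of_denseRange {X Y : Type*} {u : X → E} {v : Y → F}
    (hu : DenseRange u) (hv : DenseRange v) {A : E →L[𝕜] F} {B : F →L[𝕜] E}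
    (h : ∀ x y, inner 𝕜 (A (u x)) (v y) = inner 𝕜 (u x) (B (v y))) : A = adjoint B := by
  have := (hu.prodMap hv).equalizer (g := fun p : E × F => inner 𝕜 (A p.1) p.2)
    (h := fun p => inner 𝕜 p.1 (B p.2)) (by fun_prop) (by fun_prop) (funext fun p => h p.1 p.2)
  exact (eq_adjoint_iff A B).2 fun x y => congrFun this (x, y)

end Dense

section WeakContinuity

variable {𝕜 E F X : Type*} [NontriviallyNormedField 𝕜] [NormedAddCommGroup E] [NormedSpace 𝕜 E]
  [NormedAddCommGroup F] [NormedSpace 𝕜 F] [TopologicalSpace X]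

theorem continuousOn_dual_apply_of_dense_span {s : Set X} {Φ : X → E →L[𝕜] F} {r : ℝ}
    (hΦ : ∀ p ∈ s, ‖Φ p‖ ≤ r) (y : StrongDual 𝕜 F) {D : Set E}
    (hD : Dense (Submodule.span 𝕜 D : Set E))
    (hcont : ∀ x ∈ D, ContinuousOn (fun p => y (Φ p x)) s) (x : E) :
    ContinuousOn (fun p => y (Φ p x)) s := by
  have hspan : ∀ x ∈ Submodule.span 𝕜 D, ContinuousOn (fun p => y (Φ p x)) s := by
    intro x hx
    induction hx using Submodule.span_induction with
    | mem x hx => exact hcont x hx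
    | zero => simpa using continuousOn_const
    | add x x' _ _ hx hx' => exact (hx.add hx').congr fun p _ => by simp
    | smul c x _ hx => exact (hx.const_smul c).congr fun p _ => by simp
  obtain ⟨xs, hxsD, hlim⟩ := mem_closure_iff_seq_limit.1 (hD x)
  refine TendstoUniformlyOn.continuousOn (F := fun n p => y (Φ p (xs n))) (p := atTop) ?_
    (Frequently.of_forall fun n => hspan _ (hxsD n))
  rw [Metric.tendstoUniformlyOn_iff]
  intro ε hε
  have hnorm := (tendsto_iff_norm_sub_tendsto_zero.1 hlim).const_mul (‖y‖ * r)
  rw [mul_zero] at hnorm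
  filter_upwards [hnorm.eventually (gt_mem_nhds hε)] with n hn p hp
  rw [dist_eq_norm', ← map_sub, ← map_sub]
  calc ‖y (Φ p (xs n - x))‖ ≤ ‖y‖ * (‖Φ p‖ * ‖xs n - x‖) :=
        (y.le_opNorm _).trans (by gcongr; exact (Φ p).le_opNorm _)
    _ ≤ ‖y‖ * r * ‖xs n - x‖ := by rw [mul_assoc]; gcongr; exact hΦ p hp
    _ < ε := hn

theorem wotContinuousOnBalls_of_dense_span {H K : Type*}
    [NormedAddCommGroup H] [InnerProductSpace ℂ H] [NormedAddCommGroup K] [InnerProductSpace ℂ K]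
    {s : Set (H →L[ℂ] H)} {f : (H →L[ℂ] H) → (K →L[ℂ] K)} (hf : ∀ T ∈ s, ‖f T‖ ≤ ‖T‖)
    {D : Set K} (hD : Dense (Submodule.span ℂ D : Set K))
    (hcont : ∀ x ∈ D, ∀ (y : StrongDual ℂ K) (r : ℝ),
      ContinuousOn (fun T : H →WOT[ℂ] H => y (f T.toCLM x))
        (ContinuousLinearMapWOT.ofCLM '' (s ∩ Metric.closedBall 0 r))) :
    WOTContinuousOnBalls s f := by
  intro r
  refine ContinuousLinearMapWOT.isInducing_inducingFn.continuousOn_iff.2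
    (continuousOn_pi.2 fun ⟨x, y⟩ => ?_)
  refine continuousOn_dual_apply_of_dense_span (r := r) ?_ y hD (fun x hx => hcont x hx y r) x
  rintro _ ⟨T, ⟨hTs, hT⟩, rfl⟩
  exact (hf T hTs).trans (mem_closedBall_zero_iff.1 hT)

end WeakContinuity

section Stinespring

variable {H K : Type*}
  [NormedAddCommGroup H] [InnerProductSpace ℂ H] [CompleteSpace H]
  [NormedAddCommGroup K] [InnerProductSpace ℂ K]
  {M : VonNeumannAlgebra H} {π : (H →L[ℂ] H) → (K →L[ℂ] K)} {W : H →L[ℂ] K}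

local notation "⟪" x ", " y "⟫" => inner ℂ x y

variable (M π W) in
/-- `∑ Tᵢ ⊗ hᵢ ↦ ∑ π(Tᵢ) W hᵢ`, with `M →₀ H` standing for the algebraic tensor product. -/
def dilationSum : (M →₀ H) →ₗ[ℂ] K :=
  Finsupp.lsum ℂ fun T : M => (π T ∘L W : H →ₗ[ℂ] K)

lemma dilationSum_apply (f : M →₀ H) : dilationSum M π W f = f.sum fun T a => π T (W a) := by
  simp only [dilationSum, Finsupp.lsum_apply]
  rfl

lemma dilationSum_single (T : M) (h : H) : dilationSum M π W (Finsupp.single T h) = π T (W h) :=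
  Finsupp.lsum_single ℂ _ T h

lemma dilationSum_mapRange (A : H →L[ℂ] H) (f : M →₀ H) :
    dilationSum M π W (Finsupp.mapRange.linearMap (A : H →ₗ[ℂ] H) f) =
      f.sum fun T a => π T (W (A a)) := by
  simp [dilationSum_apply, Finsupp.sum_mapRange_index]

lemma range_dilationSum :
    LinearMap.range (dilationSum M π W) = Submodule.span ℂ {k | ∃ T ∈ M, ∃ h, k = π T (W h)} := by
  refine le_antisymm ?_ (Submodule.span_le.2 ?_)
  · rintro _ ⟨f, rfl⟩
    induction f using Finsupp.induction_linear with
    | zero => simp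
    | add f f' hf hf' => simpa using add_mem hf hf'
    | single T h =>
      exact Submodule.subset_span ⟨T, T.2, h, dilationSum_single T h⟩
  · rintro _ ⟨T, hT, h, rfl⟩
    exact ⟨Finsupp.single ⟨T, hT⟩ h, dilationSum_single _ h⟩

lemma norm_dilationSum_mapRange_le (A : H →L[ℂ] H) (f : M →₀ H) :
    ‖dilationSum M π W (Finsupp.mapRange.linearMap (A : H →ₗ[ℂ] H) f)‖ ≤
      (f.sum fun T a => ‖π T ∘L W‖ * ‖a‖) * ‖A‖ := by
  rw [dilationSum_mapRange, Finsupp.sum, Finsupp.sum, Finset.sum_mul]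
  refine (norm_sum_le _ _).trans (Finset.sum_le_sum fun T _ => ?_)
  calc ‖π T (W (A (f T)))‖ ≤ ‖π T ∘L W‖ * ‖A (f T)‖ := (π T ∘L W).le_opNorm _
    _ ≤ ‖π T ∘L W‖ * (‖A‖ * ‖f T‖) := by gcongr; exact A.le_opNorm _
    _ = ‖π T ∘L W‖ * ‖f T‖ * ‖A‖ := by ring

variable [CompleteSpace K] {P : (H →L[ℂ] H) → (H →L[ℂ] H)}

lemma IsStinespring.inner_apply_apply (hst : IsStinespring M P π W) {T T' : H →L[ℂ] H}
    (hT : T ∈ M) (hT' : T' ∈ M) (a b : H) :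
    ⟪π T (W a), π T' (W b)⟫ = ⟪a, P (star T * T') b⟫ := by
  rw [hst.dilation _ (mul_mem (star_mem hT) hT'), hst.rep.map_mul _ (star_mem hT) _ hT',
    hst.rep.map_star _ hT, star_eq_adjoint]
  simp [adjoint_inner_right]

lemma IsStinespring.inner_apply_apply_of_mem_commutant (hst : IsStinespring M P π W)
    (hPM : ∀ T ∈ M, P T ∈ M) {A : H →L[ℂ] H} (hA : A ∈ M.commutant) {T T' : H →L[ℂ] H}
    (hT : T ∈ M) (hT' : T' ∈ M) (a b : H) :
    ⟪π T (W (A a)), π T' (W b)⟫ = ⟪π T (W a), π T' (W (adjoint A b))⟫ := by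
  have hcomm : P (star T * T') * adjoint A = adjoint A * P (star T * T') := by
    rw [← star_eq_adjoint]
    exact VonNeumannAlgebra.mem_commutant_iff.1 (star_mem hA) _
      (hPM _ (mul_mem (star_mem hT) hT'))
  rw [hst.inner_apply_apply hT hT', hst.inner_apply_apply hT hT', ← adjoint_inner_right]
  exact congrArg _ (DFunLike.congr_fun hcomm b).symm

lemma IsStinespring.inner_dilationSum_mapRange (hst : IsStinespring M P π W)
    (hPM : ∀ T ∈ M, P T ∈ M) {A : H →L[ℂ] H} (hA : A ∈ M.commutant) (f f' : M →₀ H) :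
    ⟪dilationSum M π W (Finsupp.mapRange.linearMap (A : H →ₗ[ℂ] H) f), dilationSum M π W f'⟫ =
      ⟪dilationSum M π W f,
        dilationSum M π W (Finsupp.mapRange.linearMap (adjoint A : H →ₗ[ℂ] H) f')⟫ := by
  rw [dilationSum_mapRange, dilationSum_apply, dilationSum_apply, dilationSum_mapRange]
  simp only [Finsupp.sum, sum_inner, inner_sum]
  exact Finset.sum_congr rfl fun _ _ => Finset.sum_congr rfl fun _ _ =>
    hst.inner_apply_apply_of_mem_commutant hPM hA (Subtype.prop _) (Subtype.prop _) _ _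

theorem IsStinespring.norm_dilationSum_mapRange_le_of_isSelfAdjoint
    (hst : IsStinespring M P π W) (hPM : ∀ T ∈ M, P T ∈ M) {C : H →L[ℂ] H}
    (hC : C ∈ M.commutant) (hCsa : IsSelfAdjoint C) (f : M →₀ H) :
    ‖dilationSum M π W (Finsupp.mapRange.linearMap (C : H →ₗ[ℂ] H) f)‖ ≤
      ‖C‖ * ‖dilationSum M π W f‖ := by
  let g : ℕ → K := fun m =>
    dilationSum M π W (Finsupp.mapRange.linearMap ((C ^ m : H →L[ℂ] H) : H →ₗ[ℂ] H) f)
  have hshift : ∀ a b, ⟪g (a + 1), g b⟫ = ⟪g a, g (b + 1)⟫ := fun a b => by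
    simp only [g, pow_succ', Finsupp.mapRange_linearMap_mul]
    rw [hst.inner_dilationSum_mapRange hPM hC, ← star_eq_adjoint, hCsa.star_eq]
  have hgrowth : ∀ m, ‖g m‖ ≤ (f.sum fun T a => ‖π T ∘L W‖ * ‖a‖) * ‖C‖ ^ m := fun m => by
    refine (norm_dilationSum_mapRange_le _ f).trans ?_
    gcongr
    · exact Finsupp.sum_nonneg fun _ _ => by positivity
    · cases m with
      | zero => exact norm_id_le
      | succ m => exact norm_pow_le' C m.succ_pos
  have hg0 : g 0 = dilationSum M π W f :=
    congrArg (dilationSum M π W) (Finsupp.ext fun _ => rfl)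
  simpa [g, ← hg0] using norm_one_le_of_inner_succ_symm hshift (norm_nonneg C) hgrowth

theorem IsStinespring.norm_dilationSum_mapRange_le_of_mem_commutant
    (hst : IsStinespring M P π W) (hPM : ∀ T ∈ M, P T ∈ M) {S : H →L[ℂ] H}
    (hS : S ∈ M.commutant) (f : M →₀ H) :
    ‖dilationSum M π W (Finsupp.mapRange.linearMap (S : H →ₗ[ℂ] H) f)‖ ≤
      ‖S‖ * ‖dilationSum M π W f‖ := by
  set u := dilationSum M π W
  have hstar := hst.norm_dilationSum_mapRange_le_of_isSelfAdjoint hPM (mul_mem (star_mem hS) hS)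
    (IsSelfAdjoint.star_mul_self S) f
  rw [Finsupp.mapRange_linearMap_mul, CStarRing.norm_star_mul_self] at hstar
  have hsq : ‖u (Finsupp.mapRange.linearMap (S : H →ₗ[ℂ] H) f)‖ ^ 2 ≤ (‖S‖ * ‖u f‖) ^ 2 :=
    calc _ = RCLike.re ⟪u f, u (Finsupp.mapRange.linearMap ((star S : H →L[ℂ] H) : H →ₗ[ℂ] H)
          (Finsupp.mapRange.linearMap (S : H →ₗ[ℂ] H) f))⟫ := by
          rw [norm_sq_eq_re_inner (𝕜 := ℂ), hst.inner_dilationSum_mapRange hPM hS, star_eq_adjoint]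
      _ ≤ ‖u f‖ * (‖S‖ * ‖S‖ * ‖u f‖) :=
          (RCLike.re_le_norm _).trans ((norm_inner_le_norm _ _).trans (by gcongr))
      _ = (‖S‖ * ‖u f‖) ^ 2 := by ring
  exact (pow_le_pow_iff_left₀ (norm_nonneg _) (by positivity) two_ne_zero).1 hsq

variable (M π W) in
/-- For `S ∈ M'`, the bounded extension of `π(T) W h ↦ π(T) W (S h)` to `K`; a junk value for
other `S`. -/
def commutantLift (S : H →L[ℂ] H) : K →L[ℂ] K :=
  ((dilationSum M π W).comp (Finsupp.mapRange.linearMap (S : H →ₗ[ℂ] H))).extendOfNorm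
    (dilationSum M π W)

lemma IsMinimalStinespring.dense_span (hmin : IsMinimalStinespring M P π W) :
    Dense (Submodule.span ℂ {k | ∃ T ∈ M, ∃ h, k = π T (W h)} : Set K) :=
  Submodule.dense_iff_topologicalClosure_eq_top.2 hmin.minimal

lemma IsMinimalStinespring.denseRange_dilationSum (hmin : IsMinimalStinespring M P π W) :
    DenseRange (dilationSum M π W) := by
  rw [DenseRange, ← LinearMap.coe_range, range_dilationSum]
  exact hmin.dense_span

lemma IsMinimalStinespring.ext (hmin : IsMinimalStinespring M P π W) {A B : K →L[ℂ] K}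
    (hAB : ∀ T ∈ M, ∀ h, A (π T (W h)) = B (π T (W h))) : A = B :=
  ContinuousLinearMap.ext_on hmin.dense_span (by rintro _ ⟨T, hT, h, rfl⟩; exact hAB T hT h)

lemma IsMinimalStinespring.commutantLift_dilationSum (hmin : IsMinimalStinespring M P π W)
    (hPM : ∀ T ∈ M, P T ∈ M) {S : H →L[ℂ] H} (hS : S ∈ M.commutant) (f : M →₀ H) :
    commutantLift M π W S (dilationSum M π W f) =
      dilationSum M π W (Finsupp.mapRange.linearMap (S : H →ₗ[ℂ] H) f) :=
  LinearMap.extendOfNorm_eq hmin.denseRange_dilationSum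
    ⟨‖S‖, hmin.norm_dilationSum_mapRange_le_of_mem_commutant hPM hS⟩ f

lemma IsMinimalStinespring.commutantLift_apply_apply (hmin : IsMinimalStinespring M P π W)
    (hPM : ∀ T ∈ M, P T ∈ M) {S : H →L[ℂ] H} (hS : S ∈ M.commutant) {T : H →L[ℂ] H}
    (hT : T ∈ M) (h : H) : commutantLift M π W S (π T (W h)) = π T (W (S h)) := by
  simpa [dilationSum_single] using hmin.commutantLift_dilationSum hPM hS (Finsupp.single ⟨T, hT⟩ h)

lemma IsMinimalStinespring.norm_commutantLift_le (hmin : IsMinimalStinespring M P π W)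
    (hPM : ∀ T ∈ M, P T ∈ M) {S : H →L[ℂ] H} (hS : S ∈ M.commutant) :
    ‖commutantLift M π W S‖ ≤ ‖S‖ :=
  LinearMap.opNorm_extendOfNorm_le hmin.denseRange_dilationSum (norm_nonneg S)
    (hmin.norm_dilationSum_mapRange_le_of_mem_commutant hPM hS)

lemma IsMinimalStinespring.commutantLift_mul_comm (hmin : IsMinimalStinespring M P π W)
    (hPM : ∀ T ∈ M, P T ∈ M) {S : H →L[ℂ] H} (hS : S ∈ M.commutant) {T : H →L[ℂ] H}
    (hT : T ∈ M) : commutantLift M π W S * π T = π T * commutantLift M π W S :=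
  hmin.ext fun T' hT' h => by
    have hmul : ∀ x, π T (π T' x) = π (T * T') x := fun x => by
      rw [hmin.rep.map_mul _ hT _ hT']
      rfl
    change commutantLift M π W S (π T (π T' (W h))) = π T (commutantLift M π W S (π T' (W h)))
    rw [hmul, hmin.commutantLift_apply_apply hPM hS (mul_mem hT hT'),
      hmin.commutantLift_apply_apply hPM hS hT', hmul]

lemma IsMinimalStinespring.commutantLift_comp (hmin : IsMinimalStinespring M P π W)
    (hPM : ∀ T ∈ M, P T ∈ M) {S : H →L[ℂ] H} (hS : S ∈ M.commutant) :
    commutantLift M π W S ∘L W = W ∘L S := by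
  ext h
  simpa [hmin.rep.map_one] using hmin.commutantLift_apply_apply hPM hS (one_mem M) h

lemma IsMinimalStinespring.eq_commutantLift (hmin : IsMinimalStinespring M P π W)
    (hPM : ∀ T ∈ M, P T ∈ M) {S : H →L[ℂ] H} (hS : S ∈ M.commutant) {B : K →L[ℂ] K}
    (hB : ∀ T ∈ M, B * π T = π T * B) (hBW : B ∘L W = W ∘L S) :
    B = commutantLift M π W S :=
  hmin.ext fun T hT h => by
    rw [hmin.commutantLift_apply_apply hPM hS hT]
    exact (DFunLike.congr_fun (hB T hT) (W h)).trans (congrArg (π T) (DFunLike.congr_fun hBW h))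

lemma IsMinimalStinespring.wotContinuousOnBalls_commutantLift
    (hmin : IsMinimalStinespring M P π W) (hPM : ∀ T ∈ M, P T ∈ M) :
    WOTContinuousOnBalls (M.commutant : Set (H →L[ℂ] H)) (commutantLift M π W) := by
  refine wotContinuousOnBalls_of_dense_span (fun S hS => hmin.norm_commutantLift_le hPM hS)
    hmin.dense_span ?_
  rintro _ ⟨T, hT, h, rfl⟩ y r
  refine (ContinuousLinearMapWOT.continuous_dual_apply h (y ∘L π T ∘L W)).continuousOn.congr ?_
  rintro _ ⟨S, ⟨hS, -⟩, rfl⟩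
  simp only [hmin.commutantLift_apply_apply hPM hS hT]
  rfl

theorem IsMinimalStinespring.isNormalRepOn_commutantLift (hmin : IsMinimalStinespring M P π W)
    (hPM : ∀ T ∈ M, P T ∈ M) : IsNormalRepOn M.commutant (commutantLift M π W) where
  map_add S hS S' hS' := hmin.ext fun T hT h => by
    simp [hmin.commutantLift_apply_apply hPM (add_mem hS hS') hT,
      hmin.commutantLift_apply_apply hPM hS hT, hmin.commutantLift_apply_apply hPM hS' hT]
  map_smul c S hS := hmin.ext fun T hT h => by
    simp [hmin.commutantLift_apply_apply hPM (M.commutant.smul_mem hS c) hT,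
      hmin.commutantLift_apply_apply hPM hS hT]
  map_mul S hS S' hS' := hmin.ext fun T hT h => by
    simp [hmin.commutantLift_apply_apply hPM (mul_mem hS hS') hT,
      hmin.commutantLift_apply_apply hPM hS hT, hmin.commutantLift_apply_apply hPM hS' hT]
  map_star S hS := by
    rw [star_eq_adjoint (commutantLift M π W S)]
    refine eq_adjoint_of_denseRange hmin.denseRange_dilationSum hmin.denseRange_dilationSum
      fun f f' => ?_
    rw [hmin.commutantLift_dilationSum hPM (star_mem hS), hmin.commutantLift_dilationSum hPM hS,
      hmin.inner_dilationSum_mapRange hPM (star_mem hS), star_eq_adjoint, adjoint_adjoint]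
  map_one := hmin.ext fun T hT h => by
    rw [hmin.commutantLift_apply_apply hPM (one_mem _) hT]
    rfl
  normal := hmin.wotContinuousOnBalls_commutantLift hPM

end Stinespring

/-- for a minimal Stinespring triple `(π, K, W)` of `P`, each `S ∈ M'` admits a
unique operator `φ(S)` on `K` commuting with `π(M)` and satisfying `φ(S) W = W S`; moreover
`‖φ(S)‖ ≤ ‖S‖` and `φ` is a normal unital `*`-homomorphism of `M'` into `π(M)'`. -/
theorem exists_commutant_lifting {H K : Type*}
    [NormedAddCommGroup H] [InnerProductSpace ℂ H] [CompleteSpace H]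
    [NormedAddCommGroup K] [InnerProductSpace ℂ K] [CompleteSpace K]
    (M : VonNeumannAlgebra H) (P : (H →L[ℂ] H) → (H →L[ℂ] H)) (hP : IsUNCPMapOn M P)
    (π : (H →L[ℂ] H) → (K →L[ℂ] K)) (W : H →L[ℂ] K)
    (hmin : IsMinimalStinespring M P π W) :
    ∃ φ : (H →L[ℂ] H) → (K →L[ℂ] K),
      (∀ S ∈ M.commutant,
        (∀ T ∈ M, φ S * π T = π T * φ S) ∧
        φ S ∘L W = W ∘L S ∧
        ‖φ S‖ ≤ ‖S‖ ∧
        (∀ B : K →L[ℂ] K, (∀ T ∈ M, B * π T = π T * B) → B ∘L W = W ∘L S → B = φ S)) ∧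
      IsNormalRepOn M.commutant φ :=
  ⟨commutantLift M π W, fun _ hS =>
    ⟨fun _ hT => hmin.commutantLift_mul_comm hP.map_mem hS hT,
      hmin.commutantLift_comp hP.map_mem hS, hmin.norm_commutantLift_le hP.map_mem hS,
      fun _ hB hBW => hmin.eq_commutantLift hP.map_mem hS hB hBW⟩,
    hmin.isNormalRepOn_commutantLift hP.map_mem⟩
end
end

section
/- Let M be a von Neumann algebra acting on a separable complex Hilbert space H and let {P_t}_{t≥0} be a cp-semigroup on M that is weakly continuous. Then {P_t} is jointly continuous in the weak operator topology along sequences: if {X_n} is a sequence in M converging to X ∈ M in the weak operator topology and {t_n} is a sequence in [0,∞) converging to t, then P_{t_n}(X_n) converges to P_t(X) in the weak operator topology. -/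
open scoped ComplexOrder
open ContinuousLinearMap

noncomputable section

/-!
Writing `X n = Xl + (X n - Xl)`, weak continuity of `t ↦ P t Xl` reduces the claim to
`P (t n) (Y n) → 0` for a bounded sequence `Y n → 0` in `M`. Unital completely positive maps are
contractive, so `P (t n) (Y n)` is bounded, and as `H` is separable every subsequence has a further
subsequence converging weakly to some `Z ∈ M`. By normality of each `P s`, the semigroup law and
dominated convergence, `∫₀ᵇ P s Z ds` is the limit of
`∫₀ᵇ P s (P (t n) (Y n)) ds = ∫_{t n}^{t n + b} P u (Y n) du`, which tends to `0`. So all the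
averages of `s ↦ P s Z` over `[0, b]` vanish, and weak continuity at `s = 0` gives `Z = 0`.
-/

open Filter Topology ContinuousLinearMapWOT
open scoped InnerProductSpace

theorem cauchySeq_of_denseRange_of_dist_le {X α ι : Type*} [PseudoMetricSpace X]
    [PseudoMetricSpace α] {F : ℕ → X → α} {K : ℝ}
    (hF : ∀ n x x', dist (F n x) (F n x') ≤ K * dist x x') {e : ι → X} (he : DenseRange e)
    (hc : ∀ i, CauchySeq fun n => F n (e i)) (x : X) : CauchySeq fun n => F n x := by
  simp_rw [Metric.cauchySeq_iff] at hc ⊢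
  intro ε hε
  have hK : 0 < 3 * (|K| + 1) := by positivity
  obtain ⟨i, hi⟩ := he.exists_dist_lt x (div_pos hε hK)
  obtain ⟨N, hN⟩ := hc i (ε / 3) (by positivity)
  have hclose : ∀ n, dist (F n x) (F n (e i)) ≤ ε / 3 := fun n => calc
    dist (F n x) (F n (e i)) ≤ K * dist x (e i) := hF n _ _
    _ ≤ (|K| + 1) * (ε / (3 * (|K| + 1))) := by gcongr; linarith [le_abs_self K]
    _ = ε / 3 := by field_simp
  refine ⟨N, fun m hm n hn => ?_⟩
  calc dist (F m x) (F n x)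
      ≤ dist (F m x) (F m (e i)) + dist (F m (e i)) (F n (e i)) + dist (F n (e i)) (F n x) :=
        dist_triangle4 _ _ _ _
    _ < ε := by linarith [hclose m, hclose n, hN m hm n hn, dist_comm (F n (e i)) (F n x)]

theorem ContinuousOn.eq_zero_of_forall_integral_eq_zero {E : Type*} [NormedAddCommGroup E]
    [NormedSpace ℝ E] [CompleteSpace E] {g : ℝ → E} {a : ℝ} (hg : ContinuousOn g (Set.Ici a))
    (h : ∀ b, a < b → ∫ s in a..b, g s = 0) : g a = 0 := by
  have hderiv : HasDerivWithinAt (fun b => ∫ s in a..b, g s) (g a) (Set.Ici a) a :=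
    intervalIntegral.integral_hasDerivWithinAt_right (by simp)
      ((hg.mono Set.Ioi_subset_Ici_self).stronglyMeasurableAtFilter_nhdsWithin measurableSet_Ioi a)
      ((hg a Set.self_mem_Ici).mono Set.Ioi_subset_Ici_self)
  have hzero : HasDerivWithinAt (fun b => ∫ s in a..b, g s) 0 (Set.Ici a) a := by
    refine (hasDerivWithinAt_const a _ (0 : E)).congr (fun b hb => ?_) (by simp)
    rcases (Set.mem_Ici.mp hb).eq_or_lt with rfl | hab
    · simp
    · exact h b hab
  exact (uniqueDiffOn_Ici a a Set.self_mem_Ici).eq_deriv _ hderiv hzero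

theorem tendsto_intervalIntegral_of_tendsto_window {E : Type*} [NormedAddCommGroup E]
    [NormedSpace ℝ E] {f : ℕ → ℝ → E} {C b tl : ℝ} {t : ℕ → ℝ} {L : E}
    (hf : ∀ n, ContinuousOn (f n) (Set.Ici 0)) (hfC : ∀ n u, 0 ≤ u → ‖f n u‖ ≤ C)
    (ht : ∀ n, 0 ≤ t n) (htl : Tendsto t atTop (𝓝 tl)) (hb : 0 ≤ b)
    (hL : Tendsto (fun n => ∫ u in tl..tl + b, f n u) atTop (𝓝 L)) :
    Tendsto (fun n => ∫ u in t n..t n + b, f n u) atTop (𝓝 L) := by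
  have htl0 : 0 ≤ tl := ge_of_tendsto' htl ht
  have hint : ∀ n {a c : ℝ}, 0 ≤ a → 0 ≤ c → IntervalIntegrable (f n) MeasureTheory.volume a c :=
    fun n a c ha hc => ((hf n).mono fun u hu =>
      Set.mem_Ici.2 (le_min ha hc |>.trans hu.1)).intervalIntegrable
  have hpiece : ∀ n {a c : ℝ}, 0 ≤ a → 0 ≤ c → ‖∫ u in a..c, f n u‖ ≤ C * |c - a| :=
    fun n a c ha hc => intervalIntegral.norm_integral_le_of_norm_le_const fun u hu =>
      hfC n u ((le_min ha hc).trans (Set.uIoc_subset_uIcc hu).1)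
  have hdiff : ∀ n, ‖(∫ u in t n..t n + b, f n u) - ∫ u in tl..tl + b, f n u‖ ≤
      2 * C * |t n - tl| := fun n => by
    rw [intervalIntegral.integral_interval_sub_interval_comm (hint n (ht n) (by linarith [ht n]))
      (hint n htl0 (by linarith)) (hint n (ht n) htl0)]
    calc _ ≤ ‖∫ u in t n..tl, f n u‖ + ‖∫ u in t n + b..tl + b, f n u‖ := norm_sub_le _ _
      _ ≤ C * |tl - t n| + C * |tl + b - (t n + b)| :=
          add_le_add (hpiece n (ht n) htl0) (hpiece n (by linarith [ht n]) (by linarith))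
      _ = 2 * C * |t n - tl| := by
          rw [abs_sub_comm, show tl + b - (t n + b) = -(t n - tl) by ring, abs_neg]; ring
  have hsmall : Tendsto (fun n => 2 * C * |t n - tl|) atTop (𝓝 0) := by
    simpa using ((htl.sub_const tl).abs.const_mul (2 * C))
  simpa using (squeeze_zero_norm hdiff hsmall).add hL

section WOT

variable {E F : Type*} [NormedAddCommGroup E] [InnerProductSpace ℂ E]
  [NormedAddCommGroup F] [InnerProductSpace ℂ F]

theorem norm_inner_apply_le {T : E →L[ℂ] F} {r : ℝ} (hT : ‖T‖ ≤ r) (x : E) (y : F) :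
    ‖⟪T x, y⟫_ℂ‖ ≤ r * ‖x‖ * ‖y‖ := calc
  ‖⟪T x, y⟫_ℂ‖ ≤ ‖T x‖ * ‖y‖ := norm_inner_le_norm _ _
  _ ≤ ‖T‖ * ‖x‖ * ‖y‖ := by gcongr; exact T.le_opNorm x
  _ ≤ r * ‖x‖ * ‖y‖ := by gcongr

/-- `tendsto_iff_forall_inner_apply_tendsto` with the coefficients written `⟪T x, y⟫`, the order
used in `IsWeaklyContinuousSemigroup`. -/
theorem tendsto_ofCLM_iff [CompleteSpace F] {α : Type*} {l : Filter α} {T : α → E →L[ℂ] F}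
    {A : E →L[ℂ] F} :
    Tendsto (fun a => ofCLM (T a)) l (𝓝 (ofCLM A)) ↔
      ∀ x y, Tendsto (fun a => ⟪T a x, y⟫_ℂ) l (𝓝 ⟪A x, y⟫_ℂ) := by
  rw [tendsto_iff_forall_inner_apply_tendsto]
  refine forall₂_congr fun x y => ⟨fun h => ?_, fun h => ?_⟩ <;>
    simpa only [Function.comp_def, ofCLM_apply, inner_conj_symm] using
      (Complex.continuous_conj.tendsto _).comp h

theorem norm_le_of_tendsto_ofCLM [CompleteSpace F] {α : Type*} {l : Filter α} [l.NeBot]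
    {T : α → E →L[ℂ] F} {A : E →L[ℂ] F} {r : ℝ} (hT : ∀ a, ‖T a‖ ≤ r)
    (h : Tendsto (fun a => ofCLM (T a)) l (𝓝 (ofCLM A))) : ‖A‖ ≤ r := by
  obtain ⟨a⟩ := l.nonempty_of_neBot
  have hr : 0 ≤ r := (norm_nonneg _).trans (hT a)
  refine A.opNorm_le_bound hr fun x => ?_
  have hle : ‖⟪A x, A x⟫_ℂ‖ ≤ r * ‖x‖ * ‖A x‖ :=
    le_of_tendsto' ((tendsto_ofCLM_iff.1 h x (A x)).norm) fun a => norm_inner_apply_le (hT a) _ _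
  rw [inner_self_eq_norm_sq_to_K, norm_pow, RCLike.norm_ofReal, abs_norm, sq] at hle
  rcases (norm_nonneg (A x)).eq_or_lt with h0 | hpos
  · rw [← h0]; positivity
  · exact le_of_mul_le_mul_right (by linarith) hpos

theorem exists_norm_le_of_tendsto_ofCLM [CompleteSpace E] [CompleteSpace F]
    {T : ℕ → E →L[ℂ] F} {A : E →L[ℂ] F}
    (h : Tendsto (fun n => ofCLM (T n)) atTop (𝓝 (ofCLM A))) : ∃ r, ∀ n, ‖T n‖ ≤ r := by
  refine banach_steinhaus fun x => ?_
  obtain ⟨C, hC⟩ := banach_steinhaus (g := fun n => InnerProductSpace.toDual ℂ F (T n x))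
    fun y => by
      obtain ⟨C, hC⟩ := (tendsto_ofCLM_iff.1 h x y).norm.bddAbove_range
      exact ⟨C, fun n => by simpa using hC ⟨n, rfl⟩⟩
  exact ⟨C, fun n => by simpa using hC n⟩

/-- The diagonal argument, as sequential compactness of a countable product of discs. -/
theorem exists_strictMono_cauchySeq_inner {T : ℕ → E →L[ℂ] F} {r : ℝ} (hT : ∀ n, ‖T n‖ ≤ r)
    (e : ℕ → E) (f : ℕ → F) :
    ∃ φ : ℕ → ℕ, StrictMono φ ∧ ∀ i j, CauchySeq fun n => ⟪T (φ n) (e i), f j⟫_ℂ := by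
  obtain ⟨_, -, φ, hφ, hlim⟩ :=
    (isCompact_univ_pi fun p : ℕ × ℕ => isCompact_closedBall (0 : ℂ) (r * ‖e p.1‖ * ‖f p.2‖)
      ).tendsto_subseq (x := fun n p => ⟪T n (e p.1), f p.2⟫_ℂ)
      fun n => Set.mem_univ_pi.2 fun p => by simpa using norm_inner_apply_le (hT n) _ _
  exact ⟨φ, hφ, fun i j => (tendsto_pi_nhds.1 hlim (i, j)).cauchySeq⟩

theorem cauchySeq_inner_of_denseRange {T : ℕ → E →L[ℂ] F} {r : ℝ} (hT : ∀ n, ‖T n‖ ≤ r)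
    {ι κ : Type*} {e : ι → E} (he : DenseRange e) {f : κ → F} (hf : DenseRange f)
    (hc : ∀ i j, CauchySeq fun n => ⟪T n (e i), f j⟫_ℂ) (x : E) (y : F) :
    CauchySeq fun n => ⟪T n x, y⟫_ℂ := by
  have hdense_left : ∀ j x, CauchySeq fun n => ⟪T n x, f j⟫_ℂ := fun j =>
    cauchySeq_of_denseRange_of_dist_le (K := r * ‖f j‖) (fun n x x' => by
      rw [dist_eq_norm, dist_eq_norm, ← inner_sub_left, ← map_sub]
      exact (norm_inner_apply_le (hT n) _ _).trans_eq (by ring)) he (hc · j)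
  exact cauchySeq_of_denseRange_of_dist_le (K := r * ‖x‖) (fun n y y' => by
    rw [dist_eq_norm, dist_eq_norm, ← inner_sub_right]
    exact norm_inner_apply_le (hT n) _ _) hf (hdense_left · x) y

theorem WOTContinuousOnBalls.tendsto
    {s : Set (E →L[ℂ] E)} {f : (E →L[ℂ] E) → (F →L[ℂ] F)} (hf : WOTContinuousOnBalls s f)
    {α : Type*} {l : Filter α} {T : α → E →L[ℂ] E} {A : E →L[ℂ] E} {r : ℝ}
    (hT : ∀ a, T a ∈ s) (hTr : ∀ a, ‖T a‖ ≤ r) (hA : A ∈ s) (hAr : ‖A‖ ≤ r)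
    (h : Tendsto (fun a => ofCLM (T a)) l (𝓝 (ofCLM A))) :
    Tendsto (fun a => ofCLM (f (T a))) l (𝓝 (ofCLM (f A))) :=
  (hf r _ ⟨A, ⟨hA, mem_closedBall_zero_iff.2 hAr⟩, rfl⟩).tendsto.comp <|
    tendsto_nhdsWithin_iff.2
      ⟨h, Eventually.of_forall fun a => ⟨T a, ⟨hT a, mem_closedBall_zero_iff.2 (hTr a)⟩, rfl⟩⟩

end WOT

section WOTCompactness

variable {H : Type*} [NormedAddCommGroup H] [InnerProductSpace ℂ H] [CompleteSpace H]

theorem exists_tendsto_ofCLM_of_cauchySeq_inner {T : ℕ → H →L[ℂ] H} {r : ℝ}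
    (hT : ∀ n, ‖T n‖ ≤ r) (hc : ∀ x y, CauchySeq fun n => ⟪T n x, y⟫_ℂ) :
    ∃ A : H →L[ℂ] H, Tendsto (fun n => ofCLM (T n)) atTop (𝓝 (ofCLM A)) := by
  choose B hB using fun x y => cauchySeq_tendsto_of_complete (hc x y)
  let form : H →ₗ⋆[ℂ] H →ₗ[ℂ] ℂ := LinearMap.mk₂'ₛₗ (starRingEnd ℂ) (RingHom.id ℂ) B
    (fun x x' y => tendsto_nhds_unique (hB _ _) <| by
      simpa only [map_add, inner_add_left] using (hB x y).add (hB x' y))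
    (fun c x y => tendsto_nhds_unique (hB _ _) <| by
      simpa only [map_smul, inner_smul_left, smul_eq_mul] using (hB x y).const_mul _)
    (fun x y y' => tendsto_nhds_unique (hB _ _) <| by
      simpa only [inner_add_right] using (hB x y).add (hB x y'))
    (fun c x y => tendsto_nhds_unique (hB _ _) <| by
      simpa only [inner_smul_right, smul_eq_mul, RingHom.id_apply] using (hB x y).const_mul _)
  let A := InnerProductSpace.continuousLinearMapOfBilin <| form.mkContinuous₂ r fun x y =>
    le_of_tendsto' (hB x y).norm fun n => norm_inner_apply_le (hT n) x y
  refine ⟨A, tendsto_ofCLM_iff.2 fun x y => ?_⟩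
  simpa [A, InnerProductSpace.continuousLinearMapOfBilin_apply, form] using hB x y

theorem exists_strictMono_tendsto_ofCLM [TopologicalSpace.SeparableSpace H]
    {T : ℕ → H →L[ℂ] H} {r : ℝ} (hT : ∀ n, ‖T n‖ ≤ r) :
    ∃ φ : ℕ → ℕ, StrictMono φ ∧ ∃ A : H →L[ℂ] H,
      Tendsto (fun n => ofCLM (T (φ n))) atTop (𝓝 (ofCLM A)) := by
  obtain ⟨e, he⟩ := TopologicalSpace.exists_dense_seq H
  obtain ⟨φ, hφ, hc⟩ := exists_strictMono_cauchySeq_inner hT e e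
  exact ⟨φ, hφ, exists_tendsto_ofCLM_of_cauchySeq_inner (fun n => hT (φ n))
    (cauchySeq_inner_of_denseRange (fun n => hT (φ n)) he he hc)⟩

theorem VonNeumannAlgebra.mem_of_tendsto_ofCLM (M : VonNeumannAlgebra H) {α : Type*}
    {l : Filter α} [l.NeBot] {T : α → H →L[ℂ] H} {A : H →L[ℂ] H} (hT : ∀ a, T a ∈ M)
    (h : Tendsto (fun a => ofCLM (T a)) l (𝓝 (ofCLM A))) : A ∈ M := by
  have hT' : ∀ a, T a ∈ Set.centralizer (Set.centralizer (M : Set (H →L[ℂ] H))) := fun a => by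
    rw [M.centralizer_centralizer]; exact hT a
  rw [← SetLike.mem_coe, ← M.centralizer_centralizer, Set.mem_centralizer_iff]
  intro s hs
  have hcomm : ∀ a, s * T a = T a * s := fun a => Set.mem_centralizer_iff.1 (hT' a) s hs
  have hleft : Tendsto (fun a => ofCLM s * ofCLM (T a)) l (𝓝 (ofCLM s * ofCLM A)) :=
    (continuous_const_mul _).tendsto _ |>.comp h
  have hright : Tendsto (fun a => ofCLM (T a) * ofCLM s) l (𝓝 (ofCLM A * ofCLM s)) :=
    (continuous_mul_const _).tendsto _ |>.comp h
  simp only [← ofCLM_mul, hcomm] at hleft hright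
  exact ofCLM_injective (tendsto_nhds_unique hleft hright)

end WOTCompactness

section CompletelyPositive

variable {H : Type*} [NormedAddCommGroup H] [InnerProductSpace ℂ H]

theorem norm_le_of_posOpMatrix {B C : H →L[ℂ] H} {r : ℝ} (hr : 0 < r)
    (h : PosOpMatrix ![![(r : ℂ) • 1, B], ![C, (r : ℂ) • 1]]) : ‖B‖ ≤ r := by
  refine B.opNorm_le_bound hr.le fun w => ?_
  have h1 : r * (⟪w, C (B w)⟫_ℂ).re ≤ r * (r * ‖w‖) ^ 2 := by
    simpa [Fin.sum_univ_two, inner_smul_left, inner_smul_right, inner_self_eq_norm_sq_to_K,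
      ← Complex.ofReal_pow, ← Complex.ofReal_mul, norm_smul, abs_of_pos hr]
      using (h ![-B w, (r : ℂ) • w]).1
  -- `0 ≤ z` in `ComplexOrder` also says `z.im = 0`; this is what `.2` extracts.
  have h2 : ‖B w‖ ^ 2 = (⟪w, C (B w)⟫_ℂ).re := by
    simpa [Fin.sum_univ_two, inner_smul_left, inner_smul_right, inner_self_eq_norm_sq_to_K,
      ← Complex.ofReal_pow, add_neg_eq_zero] using (h ![(-Complex.I) • B w, w]).2.symm
  have hsq : ‖B w‖ ^ 2 ≤ (r * ‖w‖) ^ 2 := h2.trans_le (le_of_mul_le_mul_left h1 hr)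
  exact (pow_le_pow_iff_left₀ (norm_nonneg _) (by positivity) two_ne_zero).1 hsq

variable [CompleteSpace H]

theorem posOpMatrix_of_norm_le {T : H →L[ℂ] H} {r : ℝ} (hT : ‖T‖ ≤ r) :
    PosOpMatrix ![![(r : ℂ) • 1, T], ![star T, (r : ℂ) • 1]] := by
  intro k
  have hsum : ∑ i, ∑ j, ⟪k i, ![![(r : ℂ) • 1, T], ![star T, (r : ℂ) • 1]] i j (k j)⟫_ℂ =
      ((r * (‖k 0‖ ^ 2 + ‖k 1‖ ^ 2) + 2 * (⟪k 0, T (k 1)⟫_ℂ).re : ℝ) : ℂ) := by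
    simp only [Fin.sum_univ_two, Matrix.cons_val_zero, Matrix.cons_val_one,
      _root_.smul_apply, one_apply_eq_self, inner_smul_right, inner_self_eq_norm_sq_to_K,
      ContinuousLinearMap.star_eq_adjoint, ContinuousLinearMap.adjoint_inner_right]
    have hconj := Complex.add_conj ⟪k 0, T (k 1)⟫_ℂ
    rw [← inner_conj_symm (T (k 1)) (k 0)]
    push_cast at hconj ⊢
    linear_combination hconj
  rw [hsum, Complex.zero_le_real]
  have hz : |(⟪k 0, T (k 1)⟫_ℂ).re| ≤ r * ‖k 1‖ * ‖k 0‖ :=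
    (Complex.abs_re_le_norm _).trans ((norm_inner_symm _ _).trans_le (norm_inner_apply_le hT _ _))
  have hr : 0 ≤ r := (norm_nonneg T).trans hT
  nlinarith [abs_le.1 hz, mul_nonneg hr (sq_nonneg (‖k 0‖ - ‖k 1‖))]

variable {M : VonNeumannAlgebra H} {Q : (H →L[ℂ] H) → (H →L[ℂ] H)}

theorem IsCPMapOn.map_zero (hQ : IsCPMapOn M Q) : Q 0 = 0 := by
  simpa using hQ.map_add 0 (zero_mem M) 0 (zero_mem M)

theorem IsUNCPMapOn.norm_map_le (hQ : IsUNCPMapOn M Q) {T : H →L[ℂ] H} (hT : T ∈ M) :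
    ‖Q T‖ ≤ ‖T‖ := by
  suffices h : ∀ r, 0 < r → ‖T‖ ≤ r → ‖Q T‖ ≤ r from
    le_of_forall_pos_le_add fun ε hε => h _ (by positivity) (le_add_of_nonneg_right hε.le)
  intro r hr hTr
  have hr1 : (r : ℂ) • (1 : H →L[ℂ] H) ∈ M := M.toStarSubalgebra.smul_mem (one_mem _) _
  have hpos := hQ.cp 2 _ (fun i j => by
    fin_cases i <;> fin_cases j
    exacts [hr1, hT, star_mem hT, hr1])
    (posOpMatrix_of_norm_le hTr)
  have hQr : Q ((r : ℂ) • 1) = (r : ℂ) • 1 := by rw [hQ.map_smul _ _ (one_mem M), hQ.map_one]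
  refine norm_le_of_posOpMatrix (C := Q (star T)) hr ?_
  convert hpos using 1
  funext i j
  fin_cases i <;> fin_cases j
  exacts [hQr.symm, rfl, rfl, hQr.symm]

end CompletelyPositive

section Semigroup

variable {H : Type*} [NormedAddCommGroup H] [InnerProductSpace ℂ H] [CompleteSpace H]
  {M : VonNeumannAlgebra H} {P : ℝ → (H →L[ℂ] H) → (H →L[ℂ] H)}

theorem IsCpSemigroup.integral_inner_map_map (hP : IsCpSemigroup M P) {Y : H →L[ℂ] H}
    (hY : Y ∈ M) {t b : ℝ} (ht : 0 ≤ t) (hb : 0 ≤ b) (x y : H) :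
    ∫ s in 0..b, ⟪P s (P t Y) x, y⟫_ℂ = ∫ u in t..t + b, ⟪P u Y x, y⟫_ℂ := by
  rw [intervalIntegral.integral_congr (g := fun s => ⟪P (s + t) Y x, y⟫_ℂ) fun s hs => ?_]
  · rw [intervalIntegral.integral_comp_add_right (fun u => ⟪P u Y x, y⟫_ℂ) t, zero_add, add_comm]
  · dsimp only
    rw [hP.comp t s ht (Set.uIcc_of_le hb ▸ hs).1 Y hY]

theorem IsCpSemigroup.tendsto_integral_inner_map (hP : IsCpSemigroup M P)
    (hw : IsWeaklyContinuousSemigroup M P) {W : ℕ → H →L[ℂ] H} {A : H →L[ℂ] H} {r a b : ℝ}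
    (ha : 0 ≤ a) (hb : 0 ≤ b) (hW : ∀ n, W n ∈ M) (hWr : ∀ n, ‖W n‖ ≤ r) (hA : A ∈ M)
    (hAr : ‖A‖ ≤ r) (h : Tendsto (fun n => ofCLM (W n)) atTop (𝓝 (ofCLM A))) (x y : H) :
    Tendsto (fun n => ∫ s in a..b, ⟪P s (W n) x, y⟫_ℂ) atTop
      (𝓝 (∫ s in a..b, ⟪P s A x, y⟫_ℂ)) := by
  have hs : ∀ s ∈ Set.uIoc a b, 0 ≤ s := fun s hs => (le_min ha hb).trans hs.1.le
  refine intervalIntegral.tendsto_integral_filter_of_dominated_convergence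
    (fun _ => r * ‖x‖ * ‖y‖) (Eventually.of_forall fun n => ?_)
    (Eventually.of_forall fun n => MeasureTheory.ae_of_all _ fun s hs' => ?_)
    intervalIntegrable_const (MeasureTheory.ae_of_all _ fun s hs' => ?_)
  · exact ((hw _ (hW n) x y).mono hs).aestronglyMeasurable measurableSet_uIoc
  · exact norm_inner_apply_le (((hP.uncp s (hs s hs')).norm_map_le (hW n)).trans (hWr n)) x y
  · exact tendsto_ofCLM_iff.1 ((hP.uncp s (hs s hs')).normal.tendsto hW hWr hA hAr h) x y

theorem IsCpSemigroup.eq_zero_of_tendsto_map (hP : IsCpSemigroup M P)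
    (hw : IsWeaklyContinuousSemigroup M P) {Y : ℕ → H →L[ℂ] H} {r : ℝ} (hYM : ∀ n, Y n ∈ M)
    (hYr : ∀ n, ‖Y n‖ ≤ r) (hY : Tendsto (fun n => ofCLM (Y n)) atTop (𝓝 0)) {t : ℕ → ℝ}
    (ht : ∀ n, 0 ≤ t n) {tl : ℝ} (htl : Tendsto t atTop (𝓝 tl)) {Z : H →L[ℂ] H} (hZM : Z ∈ M)
    (hZr : ‖Z‖ ≤ r) (hZ : Tendsto (fun n => ofCLM (P (t n) (Y n))) atTop (𝓝 (ofCLM Z))) :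
    Z = 0 := by
  have htl0 : 0 ≤ tl := ge_of_tendsto' htl ht
  have hPY : ∀ n, ‖P (t n) (Y n)‖ ≤ r := fun n =>
    ((hP.uncp _ (ht n)).norm_map_le (hYM n)).trans (hYr n)
  ext x
  refine ext_inner_right ℂ fun y => ?_
  rw [_root_.zero_apply, inner_zero_left, ← hP.id_zero Z hZM]
  refine (hw Z hZM x y).eq_zero_of_forall_integral_eq_zero fun b hb => ?_
  have hlim := hP.tendsto_integral_inner_map hw le_rfl hb.le
    (fun n => (hP.uncp _ (ht n)).map_mem _ (hYM n)) hPY hZM hZr hZ x y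
  simp_rw [hP.integral_inner_map_map (hYM _) (ht _) hb.le] at hlim
  refine tendsto_nhds_unique hlim (tendsto_intervalIntegral_of_tendsto_window
    (fun n => hw _ (hYM n) x y) (fun n u hu => norm_inner_apply_le
      (((hP.uncp u hu).norm_map_le (hYM n)).trans (hYr n)) x y) ht htl hb.le ?_)
  have hzero : ∫ u in tl..tl + b, ⟪P u 0 x, y⟫_ℂ = 0 := by
    rw [intervalIntegral.integral_congr (g := fun _ => (0 : ℂ)) fun u hu => ?_,
      intervalIntegral.integral_zero]
    simp [(hP.uncp u ((le_min htl0 (by linarith)).trans hu.1)).map_zero]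
  rw [← hzero]
  exact hP.tendsto_integral_inner_map hw htl0 (by linarith) hYM hYr (zero_mem M)
    (by simpa using (norm_nonneg _).trans (hYr 0)) (by simpa using hY) x y

theorem IsCpSemigroup.tendsto_map_of_tendsto_zero [TopologicalSpace.SeparableSpace H]
    (hP : IsCpSemigroup M P) (hw : IsWeaklyContinuousSemigroup M P) {Y : ℕ → H →L[ℂ] H}
    {r : ℝ} (hYM : ∀ n, Y n ∈ M) (hYr : ∀ n, ‖Y n‖ ≤ r)
    (hY : Tendsto (fun n => ofCLM (Y n)) atTop (𝓝 0)) {t : ℕ → ℝ} (ht : ∀ n, 0 ≤ t n) {tl : ℝ}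
    (htl : Tendsto t atTop (𝓝 tl)) :
    Tendsto (fun n => ofCLM (P (t n) (Y n))) atTop (𝓝 0) := by
  refine tendsto_of_subseq_tendsto fun ns hns => ?_
  have hbound : ∀ n, ‖P (t (ns n)) (Y (ns n))‖ ≤ r := fun n =>
    ((hP.uncp _ (ht _)).norm_map_le (hYM _)).trans (hYr _)
  obtain ⟨φ, hφ, Z, hZ⟩ := exists_strictMono_tendsto_ofCLM hbound
  have hsub : Tendsto (fun n => ns (φ n)) atTop atTop := hns.comp hφ.tendsto_atTop
  have hZ0 : Z = 0 := hP.eq_zero_of_tendsto_map hw (fun n => hYM _) (fun n => hYr _)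
    (hY.comp hsub) (fun n => ht _) (htl.comp hsub)
    (M.mem_of_tendsto_ofCLM (fun n => (hP.uncp _ (ht _)).map_mem _ (hYM _)) hZ)
    (norm_le_of_tendsto_ofCLM (fun n => hbound _) hZ) hZ
  exact ⟨φ, by simpa [hZ0] using hZ⟩

end Semigroup

open Filter in
/-- on a separable Hilbert space, a weakly continuous cp-semigroup is jointly
continuous in the weak operator topology along sequences. -/
theorem cpSemigroup_joint_wot_continuity {H : Type*} [NormedAddCommGroup H]
    [InnerProductSpace ℂ H] [CompleteSpace H] [TopologicalSpace.SeparableSpace H]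
    (M : VonNeumannAlgebra H)
    (P : ℝ → (H →L[ℂ] H) → (H →L[ℂ] H))
    (hP : IsCpSemigroup M P) (hw : IsWeaklyContinuousSemigroup M P)
    (X : ℕ → (H →L[ℂ] H)) (Xl : H →L[ℂ] H)
    (hXmem : ∀ n, X n ∈ M) (hXl : Xl ∈ M)
    (hXconv : Tendsto (fun n => (ContinuousLinearMapWOT.linearEquiv (σ := RingHom.id ℂ) (E := H) (F := H) ℂ).symm (X n)) atTop
      (nhds ((ContinuousLinearMapWOT.linearEquiv (σ := RingHom.id ℂ) (E := H) (F := H) ℂ).symm Xl)))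
    (t : ℕ → ℝ) (ht : ∀ n, 0 ≤ t n) (tl : ℝ)
    (htconv : Tendsto t atTop (nhds tl)) :
    Tendsto (fun n => (ContinuousLinearMapWOT.linearEquiv (σ := RingHom.id ℂ) (E := H) (F := H) ℂ).symm (P (t n) (X n))) atTop
      (nhds ((ContinuousLinearMapWOT.linearEquiv (σ := RingHom.id ℂ) (E := H) (F := H) ℂ).symm (P tl Xl))) := by
  have hX : Tendsto (fun n => ofCLM (X n)) atTop (𝓝 (ofCLM Xl)) := hXconv
  obtain ⟨r, hr⟩ := exists_norm_le_of_tendsto_ofCLM hX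
  have hY : Tendsto (fun n => ofCLM (X n - Xl)) atTop (𝓝 0) := by
    simpa using hX.sub_const (ofCLM Xl)
  have hPY := hP.tendsto_map_of_tendsto_zero hw (fun n => sub_mem (hXmem n) hXl)
    (fun n => (norm_sub_le _ _).trans (add_le_add (hr n) (norm_le_of_tendsto_ofCLM hr hX)))
    hY ht htconv
  have hPXl : Tendsto (fun n => ofCLM (P (t n) Xl)) atTop (𝓝 (ofCLM (P tl Xl))) :=
    tendsto_ofCLM_iff.2 fun x y => ((hw Xl hXl x y) tl (ge_of_tendsto' htconv ht)).tendsto.comp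
      (tendsto_nhdsWithin_iff.2 ⟨htconv, Eventually.of_forall ht⟩)
  have hsplit : ∀ n, ofCLM (P (t n) (X n)) = ofCLM (P (t n) (X n - Xl)) + ofCLM (P (t n) Xl) :=
    fun n => by rw [← ofCLM_add, ← (hP.uncp _ (ht n)).map_add _ (sub_mem (hXmem n) hXl) _ hXl,
      sub_add_cancel]
  show Tendsto (fun n => ofCLM (P (t n) (X n))) atTop (𝓝 (ofCLM (P tl Xl)))
  simpa only [hsplit, zero_add] using hPY.add hPXl
end
end
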